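/- For square real matrices A, B of size n×n, if A B = B A then rank(A + B) ≤ rank(A) + rank(B) − rank(A B). -/

import Mathlib

open Matrix

/-- The nuclear norm of a real matrix: the sum of its singular values,
i.e. the sum of the square roots of the eigenvalues of `Aᵀ * A`. -/
noncomputable def nuclearNorm {m n : Type*} [Fintype m] [Fintype n] [DecidableEq n]
    (A : Matrix m n ℝ) : ℝ :=
  ∑ i, Real.sqrt ((show (Aᵀ * A).IsHermitian by
    rw [Matrix.IsHermitian, Matrix.conjTranspose_eq_transpose_of_trivial,
      Matrix.transpose_mul, Matrix.transpose_transpose]).eigenvalues i)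

/-- `P` is the Moore–Penrose pseudo-inverse of `X`. -/
def IsMoorePenroseInv {m n : Type*} [Fintype m] [Fintype n]
    (X : Matrix m n ℝ) (P : Matrix n m ℝ) : Prop :=
  X * P * X = X ∧ P * X * P = P ∧ (X * P)ᵀ = X * P ∧ (P * X)ᵀ = P * X

/-- `(U, σ, V)` is a skinny SVD of `X`: `U` and `V` have orthonormal columns,
`σ` lists the (positive) nonzero singular values, `X = U * diagonal σ * Vᵀ`,
and the number of columns of `U` and `V` is `rank X`. -/
def IsSkinnySVD {m n r : ℕ} (X : Matrix (Fin m) (Fin n) ℝ)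
    (U : Matrix (Fin m) (Fin r) ℝ) (σ : Fin r → ℝ) (V : Matrix (Fin n) (Fin r) ℝ) : Prop :=
  Uᵀ * U = 1 ∧ Vᵀ * V = 1 ∧ (∀ i, 0 < σ i) ∧
    X = U * Matrix.diagonal σ * Vᵀ ∧ r = X.rank

theorem LinearMap.finrank_range_add_add_finrank_range_comp_le {K V : Type*} [Field K]
    [AddCommGroup V] [Module K V] [FiniteDimensional K V] {f g : V →ₗ[K] V}
    (hfg : f ∘ₗ g = g ∘ₗ f) :
    Module.finrank K (range (f + g)) + Module.finrank K (range (f ∘ₗ g)) ≤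
      Module.finrank K (range f) + Module.finrank K (range g) := by
  have h_add : range (f + g) ≤ range f ⊔ range g := range_add_le f g
  have h_comp : range (f ∘ₗ g) ≤ range f ⊓ range g :=
    le_inf (range_comp_le_range g f) (hfg ▸ range_comp_le_range f g)
  calc Module.finrank K (range (f + g)) + Module.finrank K (range (f ∘ₗ g))
      ≤ Module.finrank K ↥(range f ⊔ range g) + Module.finrank K ↥(range f ⊓ range g) :=
        add_le_add (Submodule.finrank_mono h_add) (Submodule.finrank_mono h_comp)
    _ = Module.finrank K (range f) + Module.finrank K (range g) :=
        Submodule.finrank_sup_add_finrank_inf_eq _ _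

theorem Matrix.rank_add_add_rank_mul_le_of_commute {K n : Type*} [Field K] [Fintype n]
    {A B : Matrix n n K} (hAB : Commute A B) :
    (A + B).rank + (A * B).rank ≤ A.rank + B.rank := by
  have hcomm : A.mulVecLin ∘ₗ B.mulVecLin = B.mulVecLin ∘ₗ A.mulVecLin := by
    rw [← mulVecLin_mul, ← mulVecLin_mul, hAB.eq]
  unfold rank
  rw [mulVecLin_add, mulVecLin_mul]
  exact LinearMap.finrank_range_add_add_finrank_range_comp_le hcomm

/-- For commuting square matrices, `rank (A + B) ≤ rank A + rank B − rank (A B)`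
(stated additively to avoid truncated subtraction). -/
theorem stmt4 {n : ℕ} (A B : Matrix (Fin n) (Fin n) ℝ) (h : A * B = B * A) :
    (A + B).rank + (A * B).rank ≤ A.rank + B.rank :=
  rank_add_add_rank_mul_le_of_commute h
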